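/- arXiv:0910.2517 — 2 statements merged into one kernel-verified Lean document; each statement's English description precedes it below -/
import Mathlib

section
/- Let Λ be twice continuously differentiable on an interval I with inf_{t∈I} Λ''(t) = δ > 0. Fix β and let ψᵢ(z) = Λ(z) - Λ'(Xᵢᵀβ)z. If u, β ∈ ℝᵖ satisfy Xᵢᵀu, Xᵢᵀβ ∈ I for all i and |spt(u) ∪ spt(β)| ≤ (1-ν)(1+1/μ(X)), then Σᵢ[ψᵢ(Xᵢᵀu) - ψᵢ(Xᵢᵀβ)] ≥ (δν(1+μ(X))/2) · min_j ‖V_j‖₂² · ‖u-β‖₂². -/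
/-!
Since `Λ'' ≥ δ`, the function `Λ(t) - δt²/2` is convex on `I`, so `Λ` lies above its tangent
at `Xᵢᵀβ` by at least `δ/2 (Xᵢᵀ(u - β))²`; summing over `i` reduces the claim to a lower bound
on `‖Xw‖₂²` for `w = u - β`. Expanding `‖Xw‖₂²` through the Gram matrix and bounding its
off-diagonal entries by coherence gives, with `aⱼ = |wⱼ| ‖Vⱼ‖₂`,
`‖Xw‖₂² ≥ (1 + μ) ∑ aⱼ² - μ (∑ aⱼ)²`. As `w` is supported on `s = spt(u) ∪ spt(β)`,
Cauchy–Schwarz gives `(∑ aⱼ)² ≤ |s| ∑ aⱼ²`, and `μ|s| ≤ (1 - ν)(1 + μ)` leaves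
`ν (1 + μ) ∑ aⱼ² ≥ ν (1 + μ) minⱼ ‖Vⱼ‖₂² ‖w‖₂²`.
-/

open Finset

theorem ConvexOn.add_mul_sub_le_of_hasDerivAt {S : Set ℝ} {f : ℝ → ℝ} {f' x y : ℝ}
    (hf : ConvexOn ℝ S f) (hx : x ∈ S) (hy : y ∈ S) (hd : HasDerivAt f f' x) :
    f x + f' * (y - x) ≤ f y := by
  rcases lt_trichotomy x y with hxy | rfl | hyx
  · have h := hf.le_slope_of_hasDerivAt hx hy hxy hd
    rw [slope_def_field, le_div_iff₀ (sub_pos.2 hxy)] at h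
    linarith
  · simp
  · have h := hf.slope_le_of_hasDerivAt hy hx hyx hd
    rw [slope_def_field, div_le_iff₀ (sub_pos.2 hyx)] at h
    linarith

section StrongConvexity

variable {I : Set ℝ} {f f' f'' : ℝ → ℝ} {δ : ℝ}

theorem hasDerivAt_sub_mul_sq {t : ℝ} (hf : HasDerivAt f (f' t) t) :
    HasDerivAt (fun t => f t - δ / 2 * t ^ 2) (f' t - δ * t) t :=
  (hf.sub ((hasDerivAt_pow 2 t).const_mul (δ / 2))).congr_deriv (by simp; ring)

theorem convexOn_sub_mul_sq_of_le_deriv2 (hI : Convex ℝ I)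
    (hf : ∀ t ∈ I, HasDerivAt f (f' t) t) (hf' : ∀ t ∈ I, HasDerivAt f' (f'' t) t)
    (hδ : ∀ t ∈ I, δ ≤ f'' t) :
    ConvexOn ℝ I fun t => f t - δ / 2 * t ^ 2 := by
  have hg' : ∀ t ∈ I, HasDerivAt (fun t => f' t - δ * t) (f'' t - δ) t := fun t ht =>
    ((hf' t ht).sub ((hasDerivAt_id t).const_mul δ)).congr_deriv (by simp)
  exact convexOn_of_hasDerivWithinAt2_nonneg hI
    (fun t ht => (hasDerivAt_sub_mul_sq (hf t ht)).continuousAt.continuousWithinAt)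
    (fun t ht => (hasDerivAt_sub_mul_sq (hf t (interior_subset ht))).hasDerivWithinAt)
    (fun t ht => (hg' t (interior_subset ht)).hasDerivWithinAt)
    (fun t ht => sub_nonneg.2 (hδ t (interior_subset ht)))

theorem add_deriv_mul_sub_add_sq_le_of_le_deriv2 (hI : Convex ℝ I)
    (hf : ∀ t ∈ I, HasDerivAt f (f' t) t) (hf' : ∀ t ∈ I, HasDerivAt f' (f'' t) t)
    (hδ : ∀ t ∈ I, δ ≤ f'' t) {a b : ℝ} (ha : a ∈ I) (hb : b ∈ I) :
    f a + f' a * (b - a) + δ / 2 * (b - a) ^ 2 ≤ f b := by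
  have h := (convexOn_sub_mul_sq_of_le_deriv2 hI hf hf' hδ).add_mul_sub_le_of_hasDerivAt ha hb
    (hasDerivAt_sub_mul_sq (hf a ha))
  linear_combination h

end StrongConvexity

section Coherence

variable {m ι : Type*} [Fintype m] [Fintype ι]

theorem sq_sum_le_card_mul_sum_sq_of_support_subset {f : ι → ℝ} {s : Finset ι}
    (hf : ∀ j ∉ s, f j = 0) : (∑ j, f j) ^ 2 ≤ #s * ∑ j, f j ^ 2 := by
  rw [← sum_subset (subset_univ s) fun j _ hj => hf j hj,
    ← sum_subset (subset_univ s) fun j _ hj => by simp [hf j hj]]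
  exact sq_sum_le_card_mul_sum_sq

theorem sum_sq_sum_mul_eq_sum_sum_mul_gram (X : Matrix m ι ℝ) (w : ι → ℝ) :
    ∑ i, (∑ j, X i j * w j) ^ 2 = ∑ j, ∑ k, w j * w k * ∑ i, X i j * X i k := by
  simp_rw [sq, sum_mul_sum, mul_sum]
  rw [sum_comm]
  refine sum_congr rfl fun j _ => ?_
  rw [sum_comm]
  exact sum_congr rfl fun k _ => sum_congr rfl fun i _ => by ring

theorem le_sum_sq_sum_mul_of_coherence {X : Matrix m ι ℝ} {μ : ℝ}
    (hcoh : ∀ j k, j ≠ k →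
      |∑ i, X i j * X i k| ≤ μ * √(∑ i, X i j ^ 2) * √(∑ i, X i k ^ 2)) (w : ι → ℝ) :
    (1 + μ) * ∑ j, (|w j| * √(∑ i, X i j ^ 2)) ^ 2
        - μ * (∑ j, |w j| * √(∑ i, X i j ^ 2)) ^ 2
      ≤ ∑ i, (∑ j, X i j * w j) ^ 2 := by
  classical
  set a : ι → ℝ := fun j => |w j| * √(∑ i, X i j ^ 2) with ha
  have hterm : ∀ j k, (if j = k then (1 + μ) * (a j * a k) else 0) - μ * (a j * a k)
      ≤ w j * w k * ∑ i, X i j * X i k := by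
    intro j k
    split_ifs with hjk
    · subst hjk
      have hdiag : a j * a j = w j * w j * ∑ i, X i j * X i j := by
        rw [ha, mul_mul_mul_comm, abs_mul_abs_self, Real.mul_self_sqrt (by positivity)]
        simp only [sq]
      linarith
    · have h := mul_le_mul_of_nonneg_left (hcoh j k hjk) (abs_nonneg (w j * w k))
      have hprod : |w j * w k| * (μ * √(∑ i, X i j ^ 2) * √(∑ i, X i k ^ 2))
          = μ * (a j * a k) := by
        rw [abs_mul]; ring
      rw [← abs_mul, hprod] at h
      linarith [neg_abs_le (w j * w k * ∑ i, X i j * X i k)]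
  calc (1 + μ) * ∑ j, a j ^ 2 - μ * (∑ j, a j) ^ 2
      = ∑ j, ∑ k, ((if j = k then (1 + μ) * (a j * a k) else 0) - μ * (a j * a k)) := by
        simp only [sum_sub_distrib, sum_ite_eq, mem_univ, if_true, ← mul_sum, sq,
          sum_mul_sum]
    _ ≤ ∑ j, ∑ k, w j * w k * ∑ i, X i j * X i k :=
        sum_le_sum fun j _ => sum_le_sum fun k _ => hterm j k
    _ = ∑ i, (∑ j, X i j * w j) ^ 2 := (sum_sq_sum_mul_eq_sum_sum_mul_gram X w).symm

theorem mul_inf'_mul_sum_sq_le_sum_sq_of_coherence {X : Matrix m ι ℝ} {μ ν : ℝ}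
    (hμ : 0 ≤ μ) (hν : 0 ≤ ν)
    (hcoh : ∀ j k, j ≠ k →
      |∑ i, X i j * X i k| ≤ μ * √(∑ i, X i j ^ 2) * √(∑ i, X i k ^ 2))
    (hι : (univ : Finset ι).Nonempty) {w : ι → ℝ} {s : Finset ι} (hw : ∀ j ∉ s, w j = 0)
    (hs : μ * #s ≤ (1 - ν) * (1 + μ)) :
    ν * (1 + μ) * (univ.inf' hι fun j => ∑ i, X i j ^ 2) * ∑ j, w j ^ 2
      ≤ ∑ i, (∑ j, X i j * w j) ^ 2 := by
  set a : ι → ℝ := fun j => |w j| * √(∑ i, X i j ^ 2) with ha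
  have hA : 0 ≤ ∑ j, a j ^ 2 := by positivity
  have hmin : (univ.inf' hι fun j => ∑ i, X i j ^ 2) * ∑ j, w j ^ 2 ≤ ∑ j, a j ^ 2 := by
    rw [mul_sum]
    refine sum_le_sum fun j _ => ?_
    rw [ha, mul_pow, sq_abs, Real.sq_sqrt (by positivity), mul_comm]
    exact mul_le_mul_of_nonneg_left (inf'_le _ (mem_univ j)) (sq_nonneg _)
  have hcard : μ * (∑ j, a j) ^ 2 ≤ (1 - ν) * (1 + μ) * ∑ j, a j ^ 2 :=
    calc μ * (∑ j, a j) ^ 2 ≤ μ * (#s * ∑ j, a j ^ 2) :=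
          mul_le_mul_of_nonneg_left
            (sq_sum_le_card_mul_sum_sq_of_support_subset fun j hj => by simp [ha, hw j hj]) hμ
      _ ≤ (1 - ν) * (1 + μ) * ∑ j, a j ^ 2 := by
          rw [← mul_assoc]; exact mul_le_mul_of_nonneg_right hs hA
  have hmin' := mul_le_mul_of_nonneg_left hmin (by positivity : 0 ≤ ν * (1 + μ))
  linarith [le_sum_sq_sum_mul_of_coherence hcoh w]

end Coherence

theorem exp_linear_condition_H2_general (n p : ℕ)
    (hnep : (Finset.univ : Finset (Fin p)).Nonempty)
    (X : Matrix (Fin n) (Fin p) ℝ) (μ ν δ : ℝ)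
    (hμ : 0 < μ) (hν0 : 0 < ν) (hδ : 0 < δ)
    (hcoh : ∀ i j : Fin p, i ≠ j →
      |∑ k, X k i * X k j| ≤ μ * Real.sqrt (∑ k, X k i ^ 2) * Real.sqrt (∑ k, X k j ^ 2))
    (I : Set ℝ) (hI : Convex ℝ I)
    (Λ Λ' Λ'' : ℝ → ℝ)
    (hΛ' : ∀ t ∈ I, HasDerivAt Λ (Λ' t) t)
    (hΛ'' : ∀ t ∈ I, HasDerivAt Λ' (Λ'' t) t)
    (hδI : ∀ t ∈ I, δ ≤ Λ'' t)
    (u β : Fin p → ℝ)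
    (huI : ∀ i, (∑ j, X i j * u j) ∈ I) (hβI : ∀ i, (∑ j, X i j * β j) ∈ I)
    (hspt : (((Finset.univ.filter fun j => u j ≠ 0) ∪
        (Finset.univ.filter fun j => β j ≠ 0)).card : ℝ) ≤ (1 - ν) * (1 + 1 / μ)) :
    δ * ν * (1 + μ) / 2 * (Finset.univ.inf' hnep fun j => ∑ i, X i j ^ 2)
        * ∑ j, (u j - β j) ^ 2
      ≤ ∑ i, ((Λ (∑ j, X i j * u j) - Λ' (∑ j, X i j * β j) * ∑ j, X i j * u j)
          - (Λ (∑ j, X i j * β j) - Λ' (∑ j, X i j * β j) * ∑ j, X i j * β j)) := by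
  have hsupp : ∀ j ∉ (univ.filter fun j => u j ≠ 0) ∪ (univ.filter fun j => β j ≠ 0),
      u j - β j = 0 := fun j hj => by simp_all
  have hcard : μ * #((univ.filter fun j => u j ≠ 0) ∪ (univ.filter fun j => β j ≠ 0))
      ≤ (1 - ν) * (1 + μ) := by
    calc _ ≤ μ * ((1 - ν) * (1 + 1 / μ)) := mul_le_mul_of_nonneg_left hspt hμ.le
      _ = (1 - ν) * (1 + μ) := by field_simp; ring
  have hquad := mul_inf'_mul_sum_sq_le_sum_sq_of_coherence hμ.le hν0.le hcoh hnep hsupp hcard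
  have hrow : ∀ i, δ / 2 * (∑ j, X i j * (u j - β j)) ^ 2
      ≤ (Λ (∑ j, X i j * u j) - Λ' (∑ j, X i j * β j) * ∑ j, X i j * u j)
          - (Λ (∑ j, X i j * β j) - Λ' (∑ j, X i j * β j) * ∑ j, X i j * β j) := fun i => by
    have h := add_deriv_mul_sub_add_sq_le_of_le_deriv2 hI hΛ' hΛ'' hδI (hβI i) (huI i)
    simp only [mul_sub, sum_sub_distrib]
    linarith
  calc _ = δ / 2 * (ν * (1 + μ) * (univ.inf' hnep fun j => ∑ i, X i j ^ 2)
        * ∑ j, (u j - β j) ^ 2) := by ring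
    _ ≤ δ / 2 * ∑ i, (∑ j, X i j * (u j - β j)) ^ 2 :=
        mul_le_mul_of_nonneg_left hquad (by positivity)
    _ ≤ _ := by rw [mul_sum]; exact sum_le_sum fun i _ => hrow i

/-- Strong convexity bound for exponential linear models: if `Λ'' ≥ δ > 0` on the
interval `I` and supports are jointly small relative to the coherence, then
`Σᵢ[ψᵢ(Xᵢᵀu) - ψᵢ(Xᵢᵀβ)] ≥ (δν(1+μ)/2) minⱼ‖Vⱼ‖₂² ‖u-β‖₂²`
where `ψᵢ(z) = Λ(z) - Λ'(Xᵢᵀβ)z`. -/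
theorem exp_linear_condition_H2 (n p : ℕ) (hp : 0 < p)
    (hnep : (Finset.univ : Finset (Fin p)).Nonempty)
    (X : Matrix (Fin n) (Fin p) ℝ) (μ ν δ : ℝ)
    (hcol : ∀ j, ∃ i, X i j ≠ 0) (hμ : 0 < μ) (hν0 : 0 < ν) (hν1 : ν < 1) (hδ : 0 < δ)
    (hcoh : ∀ i j : Fin p, i ≠ j →
      |∑ k, X k i * X k j| ≤ μ * Real.sqrt (∑ k, X k i ^ 2) * Real.sqrt (∑ k, X k j ^ 2))
    (I : Set ℝ) (hI : Convex ℝ I)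
    (Λ Λ' Λ'' : ℝ → ℝ)
    (hΛ' : ∀ t ∈ I, HasDerivAt Λ (Λ' t) t)
    (hΛ'' : ∀ t ∈ I, HasDerivAt Λ' (Λ'' t) t)
    (hδI : ∀ t ∈ I, δ ≤ Λ'' t)
    (u β : Fin p → ℝ)
    (huI : ∀ i, (∑ j, X i j * u j) ∈ I) (hβI : ∀ i, (∑ j, X i j * β j) ∈ I)
    (hspt : (((Finset.univ.filter fun j => u j ≠ 0) ∪
        (Finset.univ.filter fun j => β j ≠ 0)).card : ℝ) ≤ (1 - ν) * (1 + 1 / μ)) :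
    δ * ν * (1 + μ) / 2 * (Finset.univ.inf' hnep fun j => ∑ i, X i j ^ 2)
        * ∑ j, (u j - β j) ^ 2
      ≤ ∑ i, ((Λ (∑ j, X i j * u j) - Λ' (∑ j, X i j * β j) * ∑ j, X i j * u j)
          - (Λ (∑ j, X i j * β j) - Λ' (∑ j, X i j * β j) * ∑ j, X i j * β j)) :=
  exp_linear_condition_H2_general n p hnep X μ ν δ hμ hν0 hδ hcoh I hI Λ Λ' Λ'' hΛ' hΛ'' hδI u β huI
    hβI hspt
end

section
/- Let I ⊂ ℝ be an interval of positive length and f : I → ℝ with d(f,I) := inf{|f(x)-f(y)|/|x-y| : x ≠ y ∈ I} > 0. Let X be an n×p matrix with nonzero columns and coherence μ(X) > 0, and fix ν ∈ (0,1). If u, β ∈ ℝᵖ satisfy Xᵢᵀu, Xᵢᵀβ ∈ I for all i and |spt(u)|, |spt(β)| ≤ (1-ν)(1+1/μ(X))/2, then ‖f(Xu) - f(Xβ)‖₂² ≥ d(f,I)² ν(1+μ(X)) min_j‖V_j‖₂² · ‖u-β‖₂². -/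
/-!
Write `w = u - β`. Expansivity of `f` on `I` reduces the claim to a lower bound on `d² ‖Xw‖²`.
The Gram matrix `XᵀX` has diagonal `‖V_j‖²` and, by coherence, off-diagonal entries bounded by
`μ ‖V_j‖ ‖V_l‖`; with `a_j = |w_j| ‖V_j‖` this gives `‖Xw‖² ≥ (1 + μ) ‖a‖² - μ (∑ a_j)²`.
Cauchy–Schwarz on the support of `w`, of size `s ≤ |spt u| + |spt β|`, gives
`(∑ a_j)² ≤ s ‖a‖²`, and the support hypothesis makes `1 + μ - μ s ≥ ν (1 + μ)`.
-/

open Finset Matrix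

lemma sq_mul_sum_sq_sub_le_of_expanding {κ : Type*} [Fintype κ] {I : Set ℝ} {f : ℝ → ℝ}
    {d : ℝ} (hd : 0 ≤ d) (hexp : ∀ x ∈ I, ∀ y ∈ I, d * |x - y| ≤ |f x - f y|) {a b : κ → ℝ}
    (ha : ∀ i, a i ∈ I) (hb : ∀ i, b i ∈ I) :
    d ^ 2 * ∑ i, (a i - b i) ^ 2 ≤ ∑ i, (f (a i) - f (b i)) ^ 2 := by
  rw [mul_sum]
  refine sum_le_sum fun i _ => ?_
  rw [← sq_abs (a i - b i), ← sq_abs (f (a i) - f (b i)), ← mul_pow]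
  exact pow_le_pow_left₀ (by positivity) (hexp _ (ha i) _ (hb i)) 2

lemma inf'_mul_sum_le_sum_mul {ι : Type*} (s : Finset ι) (hs : s.Nonempty) (g v : ι → ℝ)
    (hv : ∀ j ∈ s, 0 ≤ v j) : s.inf' hs g * ∑ j ∈ s, v j ≤ ∑ j ∈ s, v j * g j := by
  rw [mul_sum]
  exact sum_le_sum fun j hj => by
    rw [mul_comm]
    exact mul_le_mul_of_nonneg_left (inf'_le g hj) (hv j hj)

lemma sq_sum_le_card_mul_sum_sq_of_support_subset_s13 {ι : Type*} [Fintype ι] (S : Finset ι)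
    (a : ι → ℝ) (hS : ∀ j ∉ S, a j = 0) : (∑ j, a j) ^ 2 ≤ #S * ∑ j, a j ^ 2 := by
  have hsum : ∑ j ∈ S, a j = ∑ j, a j := sum_subset (subset_univ S) fun j _ hj => hS j hj
  calc (∑ j, a j) ^ 2 = (∑ j ∈ S, a j) ^ 2 := by rw [hsum]
    _ ≤ #S * ∑ j ∈ S, a j ^ 2 := sq_sum_le_card_mul_sum_sq
    _ ≤ #S * ∑ j, a j ^ 2 := by
      gcongr _ * ?_
      exact sum_le_sum_of_subset_of_nonneg (subset_univ S) fun j _ _ => sq_nonneg (a j)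

lemma card_filter_sub_ne_zero_le {ι : Type*} [Fintype ι] [DecidableEq ι] (u β : ι → ℝ) :
    #{j | u j - β j ≠ 0} ≤ #{j | u j ≠ 0} + #{j | β j ≠ 0} := by
  refine (card_le_card fun j hj => ?_).trans (card_union_le _ _)
  simp only [mem_filter, mem_univ, true_and, mem_union] at hj ⊢
  by_contra! h
  exact hj (by rw [h.1, h.2, sub_zero])

section Gram

variable {ι κ : Type*} [Fintype ι] [Fintype κ]

lemma sum_sq_mulVec_eq_sum_sum_mul_gram (X : Matrix κ ι ℝ) (w : ι → ℝ) :
    ∑ k, (X *ᵥ w) k ^ 2 = ∑ j, ∑ l, w j * w l * (Xᵀ * X) j l := by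
  simp only [mulVec, dotProduct, sq, sum_mul_sum]
  simp only [mul_apply, transpose_apply, mul_sum]
  rw [sum_comm]
  refine sum_congr rfl fun j _ => ?_
  rw [sum_comm]
  exact sum_congr rfl fun l _ => sum_congr rfl fun k _ => by ring

lemma one_add_mul_sum_sq_sub_le_sum_sum_mul [DecidableEq ι] (G : Matrix ι ι ℝ) {μ : ℝ}
    {c : ι → ℝ} (hdiag : ∀ j, G j j = c j ^ 2)
    (hoff : ∀ j l, j ≠ l → |G j l| ≤ μ * c j * c l) (w : ι → ℝ) :
    (1 + μ) * ∑ j, (w j * c j) ^ 2 - μ * (∑ j, |w j| * c j) ^ 2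
      ≤ ∑ j, ∑ l, w j * w l * G j l := by
  have hlhs : (1 + μ) * ∑ j, (w j * c j) ^ 2 - μ * (∑ j, |w j| * c j) ^ 2
      = ∑ j, ∑ l, ((if j = l then (1 + μ) * (w j * c j) ^ 2 else 0)
          - μ * (|w j| * c j) * (|w l| * c l)) := by
    rw [sq (∑ j, |w j| * c j), sum_mul_sum]
    simp only [sum_sub_distrib, sum_ite_eq, mem_univ, if_true, mul_sum, mul_assoc]
  rw [hlhs]
  refine sum_le_sum fun j _ => sum_le_sum fun l _ => ?_
  split_ifs with hjl
  · subst hjl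
    rw [hdiag]
    linear_combination (-μ * c j ^ 2) * sq_abs (w j)
  · have h := mul_le_mul_of_nonneg_left (hoff j l hjl) (abs_nonneg (w j * w l))
    rw [← abs_mul, abs_mul (w j)] at h
    linarith [neg_abs_le (w j * w l * G j l)]

def IsCoherenceBound (X : Matrix κ ι ℝ) (μ : ℝ) : Prop :=
  ∀ i j, i ≠ j →
    |∑ k, X k i * X k j| ≤ μ * Real.sqrt (∑ k, X k i ^ 2) * Real.sqrt (∑ k, X k j ^ 2)

lemma IsCoherenceBound.sum_sq_mulVec_ge [DecidableEq ι] {X : Matrix κ ι ℝ} {μ : ℝ}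
    (hX : IsCoherenceBound X μ) (hμ : 0 ≤ μ) (w : ι → ℝ) :
    (1 + μ - μ * #{j | w j ≠ 0}) * ∑ j, w j ^ 2 * ∑ k, X k j ^ 2
      ≤ ∑ k, (X *ᵥ w) k ^ 2 := by
  set c : ι → ℝ := fun j => Real.sqrt (∑ k, X k j ^ 2)
  have hc_sq : ∀ j, c j ^ 2 = ∑ k, X k j ^ 2 := fun j =>
    Real.sq_sqrt (sum_nonneg fun k _ => sq_nonneg (X k j))
  have hQ : ∑ j, (w j * c j) ^ 2 = ∑ j, w j ^ 2 * ∑ k, X k j ^ 2 :=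
    sum_congr rfl fun j _ => by rw [mul_pow, hc_sq]
  have hgram := one_add_mul_sum_sq_sub_le_sum_sum_mul (Xᵀ * X) (c := c)
    (fun j => by simp only [mul_apply, transpose_apply, hc_sq, sq]) hX w
  have hcs := sq_sum_le_card_mul_sum_sq_of_support_subset_s13 {j | w j ≠ 0} (fun j => |w j| * c j)
    fun j hj => by simp_all
  simp only [mul_pow, sq_abs, hc_sq] at hcs
  rw [← sum_sq_mulVec_eq_sum_sum_mul_gram, hQ] at hgram
  nlinarith [mul_le_mul_of_nonneg_left hcs hμ]

end Gram

theorem ls_condition_H2_general (n p : ℕ)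
    (hnep : (Finset.univ : Finset (Fin p)).Nonempty)
    (X : Matrix (Fin n) (Fin p) ℝ) (μ ν : ℝ)
    (hμ : 0 < μ) (hν0 : 0 < ν)
    (I : Set ℝ) (f : ℝ → ℝ) (d : ℝ) (hd : 0 < d)
    (hexp : ∀ x ∈ I, ∀ y ∈ I, d * |x - y| ≤ |f x - f y|)
    (hcoh : ∀ i j : Fin p, i ≠ j →
      |∑ k, X k i * X k j| ≤ μ * Real.sqrt (∑ k, X k i ^ 2) * Real.sqrt (∑ k, X k j ^ 2))
    (u β : Fin p → ℝ)
    (huI : ∀ i, (∑ j, X i j * u j) ∈ I) (hβI : ∀ i, (∑ j, X i j * β j) ∈ I)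
    (hsptu : ((Finset.univ.filter fun j => u j ≠ 0).card : ℝ) ≤ (1 - ν) * (1 + 1 / μ) / 2)
    (hsptβ : ((Finset.univ.filter fun j => β j ≠ 0).card : ℝ) ≤ (1 - ν) * (1 + 1 / μ) / 2) :
    d ^ 2 * ν * (1 + μ) * (Finset.univ.inf' hnep fun j => ∑ i, X i j ^ 2)
        * ∑ j, (u j - β j) ^ 2
      ≤ ∑ i, (f (∑ j, X i j * u j) - f (∑ j, X i j * β j)) ^ 2 := by
  classical
  set w : Fin p → ℝ := fun j => u j - β j
  have hcoef : ν * (1 + μ) ≤ 1 + μ - μ * #{j | w j ≠ 0} := by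
    have hcard : (#{j | w j ≠ 0} : ℝ) ≤ #{j | u j ≠ 0} + #{j | β j ≠ 0} := by
      exact_mod_cast card_filter_sub_ne_zero_le u β
    have hμ_inv : μ * (1 + 1 / μ) = 1 + μ := by field_simp; ring
    nlinarith
  have hQ : 0 ≤ ∑ j, w j ^ 2 * ∑ i, X i j ^ 2 := by positivity
  set m := univ.inf' hnep fun j => ∑ i, X i j ^ 2
  calc d ^ 2 * ν * (1 + μ) * m * ∑ j, w j ^ 2
      = d ^ 2 * (ν * (1 + μ) * (m * ∑ j, w j ^ 2)) := by ring
    _ ≤ d ^ 2 * ((1 + μ - μ * #{j | w j ≠ 0}) * ∑ j, w j ^ 2 * ∑ i, X i j ^ 2) := by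
        gcongr ?_ * ?_
        exact (mul_le_mul_of_nonneg_left (inf'_mul_sum_le_sum_mul _ hnep _ _ fun j _ =>
          sq_nonneg (w j)) (by positivity)).trans (mul_le_mul_of_nonneg_right hcoef hQ)
    _ ≤ d ^ 2 * ∑ i, (X *ᵥ w) i ^ 2 := by
        gcongr
        exact IsCoherenceBound.sum_sq_mulVec_ge hcoh hμ.le w
    _ = d ^ 2 * ∑ i, ((X *ᵥ u) i - (X *ᵥ β) i) ^ 2 := by
        rw [show w = u - β from rfl, mulVec_sub]
        rfl
    _ ≤ _ := sq_mul_sum_sq_sub_le_of_expanding hd.le hexp huI hβI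

/-- Condition H2 for least squares with an expanding nonlinearity: if
`|f(x)-f(y)| ≥ d|x-y|` on `I` with `d > 0` and both supports are at most
`(1-ν)(1+1/μ)/2`, then `‖f(Xu)-f(Xβ)‖₂² ≥ d²ν(1+μ) minⱼ‖Vⱼ‖₂² ‖u-β‖₂²`. -/
theorem ls_condition_H2 (n p : ℕ) (hp : 0 < p)
    (hnep : (Finset.univ : Finset (Fin p)).Nonempty)
    (X : Matrix (Fin n) (Fin p) ℝ) (μ ν : ℝ)
    (hcol : ∀ j, ∃ i, X i j ≠ 0) (hμ : 0 < μ) (hν0 : 0 < ν) (hν1 : ν < 1)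
    (I : Set ℝ) (f : ℝ → ℝ) (d : ℝ) (hd : 0 < d)
    (hexp : ∀ x ∈ I, ∀ y ∈ I, d * |x - y| ≤ |f x - f y|)
    (hcoh : ∀ i j : Fin p, i ≠ j →
      |∑ k, X k i * X k j| ≤ μ * Real.sqrt (∑ k, X k i ^ 2) * Real.sqrt (∑ k, X k j ^ 2))
    (u β : Fin p → ℝ)
    (huI : ∀ i, (∑ j, X i j * u j) ∈ I) (hβI : ∀ i, (∑ j, X i j * β j) ∈ I)
    (hsptu : ((Finset.univ.filter fun j => u j ≠ 0).card : ℝ) ≤ (1 - ν) * (1 + 1 / μ) / 2)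
    (hsptβ : ((Finset.univ.filter fun j => β j ≠ 0).card : ℝ) ≤ (1 - ν) * (1 + 1 / μ) / 2) :
    d ^ 2 * ν * (1 + μ) * (Finset.univ.inf' hnep fun j => ∑ i, X i j ^ 2)
        * ∑ j, (u j - β j) ^ 2
      ≤ ∑ i, (f (∑ j, X i j * u j) - f (∑ j, X i j * β j)) ^ 2 :=
  ls_condition_H2_general n p hnep X μ ν hμ hν0 I f d hd hexp hcoh u β huI hβI hsptu hsptβ
end
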